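/- Let X and Y be irreducible 1-step shifts of finite type over finite alphabets, Z a shift space, and φ : X → Y, ψ : Y → Z 1-block factor codes, with π = ψ ∘ φ. Let y ∈ Y be a recurrent point. Then d_{φ/ψ}(y) = min{ d_{φ/ψ}(w) : w a block occurring in y }. -/

import Mathlib

/- Common definitions: shift spaces over finite alphabets, 1-block factor codes,
   transition classes, class degrees, relative transition classes, relative class
   degrees, routability and depth. -/

open Set

namespace SymbDyn

variable {A B C D : Type*}

/-- The shift map `σ` on bi-infinite sequences. -/
def shift (α : Type*) : (ℤ → α) → (ℤ → α) := fun x i => x (i + 1)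

/-- The map on points induced letterwise by a symbol map (a 1-block code). -/
def sliding (Φ : A → B) : (ℤ → A) → (ℤ → B) := fun x i => Φ (x i)

/-- The block `w` occurs in the point `x` starting at coordinate `n`. -/
def OccursAt (x : ℤ → A) (w : List A) (n : ℤ) : Prop :=
  ∀ i : ℕ, i < w.length → w[i]? = some (x (n + i))

/-- The block `w` occurs somewhere in the point `x`. -/
def OccursInPoint (x : ℤ → A) (w : List A) : Prop := ∃ n : ℤ, OccursAt x w n

/-- The block `w` occurs in (a point of) the subset `X`. -/
def BlockOccursIn (X : Set (ℤ → A)) (w : List A) : Prop := ∃ x ∈ X, OccursInPoint x w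

/-- `X` is a shift space: nonempty, closed (product of discrete topologies) and
shift-invariant. -/
def IsShiftSpace [TopologicalSpace A] (X : Set (ℤ → A)) : Prop :=
  X.Nonempty ∧ IsClosed X ∧ shift A '' X = X

/-- `X` is irreducible: any two blocks of `X` can be connected inside `X`. -/
def IsIrreducibleShift (X : Set (ℤ → A)) : Prop :=
  ∀ u v : List A, BlockOccursIn X u → BlockOccursIn X v →
    ∃ t : List A, BlockOccursIn X (u ++ t ++ v)

/-- `X` is a 1-step shift of finite type: any point all of whose 2-blocks occur
in `X` lies in `X`. -/
def IsOneStepSFT (X : Set (ℤ → A)) : Prop :=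
  ∀ z : ℤ → A, (∀ i : ℤ, BlockOccursIn X [z i, z (i + 1)]) → z ∈ X

/-- `x` is right transitive in `X`: every block of `X` occurs in `x|_[0,∞)`. -/
def RightTransitive (X : Set (ℤ → A)) (x : ℤ → A) : Prop :=
  ∀ w : List A, BlockOccursIn X w → ∃ n : ℤ, 0 ≤ n ∧ OccursAt x w n

/-- `x` is left transitive in `X`: every block of `X` occurs in `x|_(-∞,0]`. -/
def LeftTransitive (X : Set (ℤ → A)) (x : ℤ → A) : Prop :=
  ∀ w : List A, BlockOccursIn X w → ∃ n : ℤ, n + w.length ≤ 1 ∧ OccursAt x w n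

/-- `x` is bi-transitive in `X`. -/
def BiTransitive (X : Set (ℤ → A)) (x : ℤ → A) : Prop :=
  RightTransitive X x ∧ LeftTransitive X x

/-- `x` is recurrent: every block of `x` occurs infinitely often to the right. -/
def Recurrent (x : ℤ → A) : Prop :=
  ∀ w : List A, OccursInPoint x w → ∀ n : ℤ, ∃ m : ℤ, n ≤ m ∧ OccursAt x w m

/-- `xb` is a `(π,m)`-bridge from `x` to `x'` (all living in `X`). -/
def IsBridge (X : Set (ℤ → A)) (π : (ℤ → A) → ℤ → C) (m : ℤ) (x x' xb : ℤ → A) : Prop :=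
  xb ∈ X ∧ (∀ i : ℤ, i ≤ m → xb i = x i) ∧
    (∃ n : ℤ, m < n ∧ ∀ i : ℤ, n ≤ i → xb i = x' i) ∧ π xb = π x

/-- `x →_π x'`: `π x = π x'` and there is a `(π,m)`-bridge from `x` to `x'`
for every `m`. -/
def TransTo (X : Set (ℤ → A)) (π : (ℤ → A) → ℤ → C) (x x' : ℤ → A) : Prop :=
  π x = π x' ∧ ∀ m : ℤ, ∃ xb, IsBridge X π m x x' xb

/-- `x ∼_π x'`. -/
def TransEquiv (X : Set (ℤ → A)) (π : (ℤ → A) → ℤ → C) (x x' : ℤ → A) : Prop :=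
  TransTo X π x x' ∧ TransTo X π x' x

/-- The `π`-transition class `[x]_π` of `x` inside `X`. -/
def transClass (X : Set (ℤ → A)) (π : (ℤ → A) → ℤ → C) (x : ℤ → A) : Set (ℤ → A) :=
  {x' | x' ∈ X ∧ TransEquiv X π x x'}

/-- The number `d_π(z)` of `π`-transition classes over the point `z`. -/
noncomputable def ptDeg (X : Set (ℤ → A)) (π : (ℤ → A) → ℤ → C) (z : ℤ → C) : ℕ∞ :=
  {S : Set (ℤ → A) | ∃ x ∈ X, π x = z ∧ S = transClass X π x}.encard

/-- The class degree `d_π = min_{z ∈ Z} d_π(z)`. -/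
noncomputable def classDeg (X : Set (ℤ → A)) (Z : Set (ℤ → C)) (π : (ℤ → A) → ℤ → C) : ℕ∞ :=
  ⨅ z ∈ Z, ptDeg X π z

/-- `xb` is a `(φ/ψ,m)`-bridge from `x` to `x'` relative to `ψ` (whose transition
relation lives on `Y`). -/
def IsRelBridge (X : Set (ℤ → A)) (Y : Set (ℤ → B)) (φ : (ℤ → A) → ℤ → B)
    (ψ : (ℤ → B) → ℤ → C) (m : ℤ) (x x' xb : ℤ → A) : Prop :=
  xb ∈ X ∧ (∀ i : ℤ, i ≤ m → xb i = x i) ∧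
    (∃ n : ℤ, m < n ∧ ∀ i : ℤ, n ≤ i → xb i = x' i) ∧ TransEquiv Y ψ (φ xb) (φ x)

/-- `x →_{φ/ψ} x'`. -/
def RelTransTo (X : Set (ℤ → A)) (Y : Set (ℤ → B)) (φ : (ℤ → A) → ℤ → B)
    (ψ : (ℤ → B) → ℤ → C) (x x' : ℤ → A) : Prop :=
  TransEquiv Y ψ (φ x) (φ x') ∧ ∀ m : ℤ, ∃ xb, IsRelBridge X Y φ ψ m x x' xb

/-- `x ∼_{φ/ψ} x'`. -/
def RelTransEquiv (X : Set (ℤ → A)) (Y : Set (ℤ → B)) (φ : (ℤ → A) → ℤ → B)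
    (ψ : (ℤ → B) → ℤ → C) (x x' : ℤ → A) : Prop :=
  RelTransTo X Y φ ψ x x' ∧ RelTransTo X Y φ ψ x' x

/-- The `φ/ψ`-transition class `[x]_{φ/ψ}` of `x`. -/
def relClass (X : Set (ℤ → A)) (Y : Set (ℤ → B)) (φ : (ℤ → A) → ℤ → B)
    (ψ : (ℤ → B) → ℤ → C) (x : ℤ → A) : Set (ℤ → A) :=
  {x' | x' ∈ X ∧ RelTransEquiv X Y φ ψ x x'}

/-- The number `d_{φ/ψ}(y)` of `φ/ψ`-transition classes over `y`. -/
noncomputable def relPtDeg (X : Set (ℤ → A)) (Y : Set (ℤ → B)) (φ : (ℤ → A) → ℤ → B)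
    (ψ : (ℤ → B) → ℤ → C) (y : ℤ → B) : ℕ∞ :=
  {S : Set (ℤ → A) | ∃ x ∈ X, φ x = y ∧ S = relClass X Y φ ψ x}.encard

/-- The class degree `d_{φ/ψ} = min_{y ∈ Y} d_{φ/ψ}(y)` of `φ` relative to `ψ`. -/
noncomputable def relClassDeg (X : Set (ℤ → A)) (Y : Set (ℤ → B)) (φ : (ℤ → A) → ℤ → B)
    (ψ : (ℤ → B) → ℤ → C) : ℕ∞ :=
  ⨅ y ∈ Y, relPtDeg X Y φ ψ y

/-- The block `x|_{[s, s+l-1]}`. -/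
def segment (x : ℤ → A) (s : ℤ) (l : ℕ) : List A := (List.range l).map fun i => x (s + i)

/-- The block `u` (of the same length as `w`) is routable through the symbol `a`
at coordinate `n` (coordinates start at 1) with respect to the 1-block code
induced by `Θ`, over the target block `w`. -/
def RoutableThru (X : Set (ℤ → A)) (Θ : A → C) (w : List C) (n : ℕ) (a : A)
    (u : List A) : Prop :=
  ∃ v : List A, BlockOccursIn X v ∧ v.length = u.length ∧ v.map Θ = w ∧
    v[0]? = u[0]? ∧ v[v.length - 1]? = u[u.length - 1]? ∧
    v[n - 1]? = some a

/-- `u` is `φ/ψ`-routable through `a` at `n` over the block `w` of `Y`. -/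
def RelRoutable (X : Set (ℤ → A)) (Φ : A → B) (Ψ : B → C) (w : List B) (n : ℕ) (a : A)
    (u : List A) : Prop :=
  RoutableThru X (Ψ ∘ Φ) (w.map Ψ) n a u

/-- The block `w` of `Y` is `φ/ψ`-presented through `M` at `n`. -/
def RelPresented (X : Set (ℤ → A)) (Φ : A → B) (Ψ : B → C) (w : List B) (n : ℕ)
    (M : Set A) : Prop :=
  ∀ u : List A, BlockOccursIn X u → u.map Φ = w → ∃ a ∈ M, RelRoutable X Φ Ψ w n a u

/-- The `φ/ψ`-depth `d_{φ/ψ}(w)` of a block `w`. -/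
noncomputable def relDepth (X : Set (ℤ → A)) (Φ : A → B) (Ψ : B → C) (w : List B) : ℕ∞ :=
  sInf {k : ℕ∞ | ∃ n : ℕ, 1 ≤ n ∧ n ≤ w.length ∧
    ∃ M : Finset A, RelPresented X Φ Ψ w n ↑M ∧ k = (M.card : ℕ∞)}

end SymbDyn

/-!
If `w` occurs in the recurrent point `y` and is presented through `M`, then `w` occurs in `y`
infinitely often, and at each occurrence every lift of `y` can be routed through a symbol of `M`.
Among `|M| + 1` lifts from distinct `φ/ψ`-classes, two share their routing symbol at infinitely
many occurrences; splicing their routes there gives `φ/ψ`-bridges between them arbitrarily far to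
the left, so they are equivalent after all. Hence `d_{φ/ψ}(y) ≤ d_{φ/ψ}(w)`.

Conversely, fix a representative of each of the finitely many classes over `y`. Every lift `x` is
bridged to the representative of its class and back again; the first bridge may be chosen to
depend only on `(x 0, [x])`, so all of them have merged into the representatives by a common
coordinate `p`. Thus every lift can be rerouted through the set `M` of symbols of the
representatives at `p`, and `|M| ≤ d_{φ/ψ}(y)`. By compactness the same holds for the lifts of a
long enough block of `y` around `p`.
-/

namespace SymbDyn

open Filter

section Blocks

variable {A B : Type*}

theorem segment_eq_map_range (x : ℤ → A) (s : ℤ) (l : ℕ) :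
    segment x s l = (List.range l).map fun i : ℕ => x (s + i) :=
  (congrArg (List.map _) (List.flatMap_pure_eq_map Nat.cast _)).trans (List.map_map ..)

@[simp]
theorem length_segment (x : ℤ → A) (s : ℤ) (l : ℕ) : (segment x s l).length = l := by
  simp [segment_eq_map_range]

theorem getElem?_segment (x : ℤ → A) (s : ℤ) {l i : ℕ} (h : i < l) :
    (segment x s l)[i]? = some (x (s + i)) := by
  simp [segment_eq_map_range, h]

theorem map_segment (Φ : A → B) (x : ℤ → A) (s : ℤ) (l : ℕ) :
    (segment x s l).map Φ = segment (sliding Φ x) s l := by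
  simp [segment_eq_map_range, sliding]

theorem segment_eq_segment_iff {x x' : ℤ → A} {s : ℤ} {l : ℕ} :
    segment x s l = segment x' s l ↔ ∀ i, s ≤ i → i < s + l → x i = x' i := by
  rw [segment_eq_map_range, segment_eq_map_range, List.map_inj_left]
  refine ⟨fun h i hsi hil => ?_, fun h i hi => h _ (by omega) (by simp at hi; omega)⟩
  simpa [Int.toNat_of_nonneg (sub_nonneg.2 hsi)] using
    h (i - s).toNat (List.mem_range.2 (by omega))

theorem occursAt_segment (x : ℤ → A) (s : ℤ) (l : ℕ) : OccursAt x (segment x s l) s :=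
  fun _ hi => getElem?_segment x s (by simpa using hi)

theorem OccursAt.eq_segment {x : ℤ → A} {w : List A} {s : ℤ} (h : OccursAt x w s) :
    w = segment x s w.length := by
  refine List.ext_getElem? fun i => ?_
  by_cases hi : i < w.length
  · rw [h i hi, getElem?_segment x s hi]
  · simp [not_lt.1 hi]

theorem map_segment_eq_of_occursAt {Φ : A → B} {x : ℤ → A} {y : ℤ → B} {w : List B} {s : ℤ}
    (hxy : sliding Φ x = y) (hw : OccursAt y w s) : (segment x s w.length).map Φ = w := by
  rw [map_segment, hxy, ← hw.eq_segment]

theorem blockOccursIn_segment {X : Set (ℤ → A)} {x : ℤ → A} (hx : x ∈ X) (s : ℤ) (l : ℕ) :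
    BlockOccursIn X (segment x s l) :=
  ⟨x, hx, s, occursAt_segment x s l⟩

theorem blockOccursIn_pair {X : Set (ℤ → A)} {x : ℤ → A} (hx : x ∈ X) (i : ℤ) :
    BlockOccursIn X [x i, x (i + 1)] := by
  simpa [segment_eq_map_range, List.range_succ] using blockOccursIn_segment hx i 2

end Blocks

section Shift

variable {A : Type*} [TopologicalSpace A] {X : Set (ℤ → A)}

theorem IsShiftSpace.shift_mem_iff (hX : IsShiftSpace X) {x : ℤ → A} :
    shift A x ∈ X ↔ x ∈ X := by
  refine ⟨fun h => ?_, fun h => hX.2.2 ▸ ⟨x, h, rfl⟩⟩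
  rw [← hX.2.2] at h
  obtain ⟨z, hz, hzx⟩ := h
  convert hz using 1
  funext i
  simpa [shift] using (congrFun hzx (i - 1)).symm

theorem IsShiftSpace.comp_add_mem (hX : IsShiftSpace X) {x : ℤ → A} (hx : x ∈ X) (k : ℤ) :
    (fun i => x (i + k)) ∈ X := by
  induction k using Int.induction_on with
  | zero => simpa using hx
  | succ n ih =>
    convert hX.shift_mem_iff.2 ih using 1
    funext i
    exact congrArg x (by ring)
  | pred n ih =>
    refine hX.shift_mem_iff.1 ?_
    convert ih using 1
    funext i
    exact congrArg x (by ring)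

theorem IsShiftSpace.exists_occursAt (hX : IsShiftSpace X) {w : List A}
    (hw : BlockOccursIn X w) (s : ℤ) : ∃ x ∈ X, OccursAt x w s := by
  obtain ⟨x, hx, n, hn⟩ := hw
  exact ⟨_, hX.comp_add_mem hx (n - s), fun i hi => by
    rw [hn i hi]; exact congrArg (some ∘ x) (by ring)⟩

end Shift

section Splice

variable {A B : Type*}

def splice (θ : ℤ) (x x' : ℤ → A) : ℤ → A := fun i => if i < θ then x i else x' i

variable {θ i : ℤ} {x x' : ℤ → A}

theorem splice_of_lt (h : i < θ) : splice θ x x' i = x i := if_pos h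

theorem splice_of_ge (h : θ ≤ i) : splice θ x x' i = x' i := if_neg (not_lt.2 h)

theorem splice_of_le_of_eq (hθ : x θ = x' θ) (h : i ≤ θ) : splice θ x x' i = x i := by
  rcases h.lt_or_eq with h | rfl
  · exact splice_of_lt h
  · exact (splice_of_ge le_rfl).trans hθ.symm

theorem sliding_splice (Φ : A → B) :
    sliding Φ (splice θ x x') = splice θ (sliding Φ x) (sliding Φ x') :=
  funext fun i => apply_ite Φ (i < θ) (x i) (x' i)

theorem sliding_splice_eq {Φ : A → B} {z : ℤ → B} (h : sliding Φ x = z) (h' : sliding Φ x' = z) :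
    sliding Φ (splice θ x x') = z := by
  rw [sliding_splice, h, h']
  exact funext fun i => ite_self _

theorem IsOneStepSFT.splice_mem {X : Set (ℤ → A)} (hX : IsOneStepSFT X) (hx : x ∈ X)
    (hx' : x' ∈ X) (hθ : x θ = x' θ) : splice θ x x' ∈ X := by
  refine hX _ fun i => ?_
  rcases le_or_gt (i + 1) θ with hi | hi
  · rw [splice_of_le_of_eq hθ (by omega), splice_of_le_of_eq hθ hi]
    exact blockOccursIn_pair hx i
  · rw [splice_of_ge (by omega), splice_of_ge (by omega)]
    exact blockOccursIn_pair hx' i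

end Splice

section Transition

variable {B C : Type*} {Y : Set (ℤ → B)} {u v z : ℤ → B}

theorem transTo_of_eq_of_tail_eq {π : (ℤ → B) → ℤ → C} (hu : u ∈ Y) (hπ : π u = π v) {β : ℤ}
    (h : ∀ i, β ≤ i → u i = v i) : TransTo Y π u v :=
  ⟨hπ, fun m => ⟨u, hu, fun _ _ => rfl,
    ⟨max (m + 1) β, by omega, fun i hi => h i (le_of_max_le_right hi)⟩, rfl⟩⟩

theorem transEquiv_of_eq_of_tail_eq {π : (ℤ → B) → ℤ → C} (hu : u ∈ Y) (hv : v ∈ Y)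
    (hπ : π u = π v) {β : ℤ} (h : ∀ i, β ≤ i → u i = v i) : TransEquiv Y π u v :=
  ⟨transTo_of_eq_of_tail_eq hu hπ h,
    transTo_of_eq_of_tail_eq hv hπ.symm fun i hi => (h i hi).symm⟩

theorem transEquiv_refl {π : (ℤ → B) → ℤ → C} (hu : u ∈ Y) : TransEquiv Y π u u :=
  transEquiv_of_eq_of_tail_eq hu hu rfl (β := 0) fun _ _ => rfl

theorem TransEquiv.symm {π : (ℤ → B) → ℤ → C} (h : TransEquiv Y π u v) : TransEquiv Y π v u :=
  ⟨h.2, h.1⟩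

variable {Ψ : B → C}

theorem TransTo.trans (hY : IsOneStepSFT Y) (h₁ : TransTo Y (sliding Ψ) u v)
    (h₂ : TransTo Y (sliding Ψ) v z) : TransTo Y (sliding Ψ) u z := by
  refine ⟨h₁.1.trans h₂.1, fun m => ?_⟩
  obtain ⟨b₁, hb₁, hb₁l, ⟨n₁, hmn₁, hb₁r⟩, hb₁ψ⟩ := h₁.2 m
  obtain ⟨b₂, hb₂, hb₂l, ⟨n₂, hn₁₂, hb₂r⟩, hb₂ψ⟩ := h₂.2 n₁
  have hθ : b₁ n₁ = b₂ n₁ := (hb₁r n₁ le_rfl).trans (hb₂l n₁ le_rfl).symm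
  refine ⟨splice n₁ b₁ b₂, hY.splice_mem hb₁ hb₂ hθ,
    fun i hi => (splice_of_lt (by omega)).trans (hb₁l i hi),
    ⟨n₂, by omega, fun i hi => (splice_of_ge (by omega)).trans (hb₂r i hi)⟩,
    sliding_splice_eq hb₁ψ (hb₂ψ.trans h₁.1.symm)⟩

theorem TransEquiv.trans (hY : IsOneStepSFT Y) (h₁ : TransEquiv Y (sliding Ψ) u v)
    (h₂ : TransEquiv Y (sliding Ψ) v z) : TransEquiv Y (sliding Ψ) u z :=
  ⟨h₁.1.trans hY h₂.1, h₂.2.trans hY h₁.2⟩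

theorem transEquiv_splice (hY : IsOneStepSFT Y) {θ : ℤ} (hu : u ∈ Y) (hv : v ∈ Y)
    (huv : sliding Ψ u = sliding Ψ v) (hθ : u θ = v θ) (hvz : TransEquiv Y (sliding Ψ) v z) :
    TransEquiv Y (sliding Ψ) (splice θ u v) z :=
  (transEquiv_of_eq_of_tail_eq (hY.splice_mem hu hv hθ) hv (sliding_splice_eq huv rfl)
    fun _ hi => splice_of_ge hi).trans hY hvz

end Transition

section RelTransition

variable {A B C : Type*} {X : Set (ℤ → A)} {Y : Set (ℤ → B)} {Φ : A → B} {Ψ : B → C}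
  {x x' x'' : ℤ → A}

theorem sliding_mem (hφ : sliding Φ '' X = Y) (hx : x ∈ X) : sliding Φ x ∈ Y :=
  hφ ▸ mem_image_of_mem _ hx

theorem mem_relClass_self (hφ : sliding Φ '' X = Y) (hx : x ∈ X) :
    x ∈ relClass X Y (sliding Φ) (sliding Ψ) x := by
  have hrefl : RelTransTo X Y (sliding Φ) (sliding Ψ) x x :=
    ⟨transEquiv_refl (sliding_mem hφ hx), fun m =>
      ⟨x, hx, fun _ _ => rfl, ⟨m + 1, by omega, fun _ _ => rfl⟩,
        transEquiv_refl (sliding_mem hφ hx)⟩⟩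
  exact ⟨hx, hrefl, hrefl⟩

theorem RelTransTo.trans (hXsft : IsOneStepSFT X) (hYsft : IsOneStepSFT Y)
    (hφ : sliding Φ '' X = Y) (h₁ : RelTransTo X Y (sliding Φ) (sliding Ψ) x x')
    (h₂ : RelTransTo X Y (sliding Φ) (sliding Ψ) x' x'') :
    RelTransTo X Y (sliding Φ) (sliding Ψ) x x'' := by
  refine ⟨h₁.1.trans hYsft h₂.1, fun m => ?_⟩
  obtain ⟨b₁, hb₁, hb₁l, ⟨n₁, hmn₁, hb₁r⟩, hb₁ψ⟩ := h₁.2 m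
  obtain ⟨b₂, hb₂, hb₂l, ⟨n₂, hn₁₂, hb₂r⟩, hb₂ψ⟩ := h₂.2 n₁
  have hθ : b₁ n₁ = b₂ n₁ := (hb₁r n₁ le_rfl).trans (hb₂l n₁ le_rfl).symm
  refine ⟨splice n₁ b₁ b₂, hXsft.splice_mem hb₁ hb₂ hθ,
    fun i hi => (splice_of_lt (by omega)).trans (hb₁l i hi),
    ⟨n₂, by omega, fun i hi => (splice_of_ge (by omega)).trans (hb₂r i hi)⟩, ?_⟩
  have hb₂x := hb₂ψ.trans hYsft h₁.1.symm
  rw [sliding_splice]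
  exact transEquiv_splice hYsft (sliding_mem hφ hb₁) (sliding_mem hφ hb₂)
    (hb₁ψ.1.1.trans hb₂x.1.1.symm) (congrArg Φ hθ) hb₂x

theorem relClass_eq_of_relTransEquiv (hXsft : IsOneStepSFT X) (hYsft : IsOneStepSFT Y)
    (hφ : sliding Φ '' X = Y) (h : RelTransEquiv X Y (sliding Φ) (sliding Ψ) x x') :
    relClass X Y (sliding Φ) (sliding Ψ) x = relClass X Y (sliding Φ) (sliding Ψ) x' := by
  ext z
  exact ⟨fun ⟨hz, h₁, h₂⟩ => ⟨hz, h.2.trans hXsft hYsft hφ h₁, h₂.trans hXsft hYsft hφ h.1⟩,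
    fun ⟨hz, h₁, h₂⟩ => ⟨hz, h.1.trans hXsft hYsft hφ h₁, h₂.trans hXsft hYsft hφ h.2⟩⟩

end RelTransition

section Routes

variable {A C : Type*} [TopologicalSpace A] {X : Set (ℤ → A)} {Θ : A → C} {x : ℤ → A} {s : ℤ}
  {l n : ℕ} {a : A}

theorem RoutableThru.exists_point (hX : IsShiftSpace X) (hn : 1 ≤ n) (hnl : n ≤ l)
    (h : RoutableThru X Θ ((segment x s l).map Θ) n a (segment x s l)) :
    ∃ V ∈ X, V s = x s ∧ V (s + l - 1) = x (s + l - 1) ∧ V (s + n - 1) = a ∧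
      ∀ i, s ≤ i → i < s + l → Θ (V i) = Θ (x i) := by
  obtain ⟨v, hv, hlen, hmap, hfirst, hlast, ha⟩ := h
  obtain ⟨V, hV, hVv⟩ := hX.exists_occursAt hv s
  have hvV : v = segment V s l := by simpa [hlen] using hVv.eq_segment
  subst hvV
  simp only [length_segment] at hfirst hlast
  rw [getElem?_segment _ _ (by omega), getElem?_segment _ _ (by omega)] at hfirst hlast
  rw [getElem?_segment _ _ (by omega)] at ha
  rw [map_segment, map_segment, segment_eq_segment_iff] at hmap
  have hl : s + ((l - 1 : ℕ) : ℤ) = s + l - 1 := by omega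
  have hn' : s + ((n - 1 : ℕ) : ℤ) = s + n - 1 := by omega
  exact ⟨V, hV, by simpa using hfirst, by simpa [hl] using hlast, by simpa [hn'] using ha, hmap⟩

theorem RoutableThru.exists_reroute (hX : IsShiftSpace X) (hXsft : IsOneStepSFT X) (hx : x ∈ X)
    (hn : 1 ≤ n) (hnl : n ≤ l)
    (h : RoutableThru X Θ ((segment x s l).map Θ) n a (segment x s l)) :
    ∃ R ∈ X, (∀ i ≤ s, R i = x i) ∧ (∀ i, s + l - 1 ≤ i → R i = x i) ∧ R (s + n - 1) = a ∧
      sliding Θ R = sliding Θ x := by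
  obtain ⟨V, hV, hVs, hVl, hVa, hVΘ⟩ := h.exists_point hX hn hnl
  set inner := splice (s + l - 1) V x
  have hinner_left : ∀ i ≤ s + l - 1, inner i = V i := fun i => splice_of_le_of_eq hVl
  have hinner_right : ∀ i, s + l - 1 ≤ i → inner i = x i := fun i => splice_of_ge
  have hs : x s = inner s := ((hinner_left s (by omega)).trans hVs).symm
  refine ⟨splice s x inner, hXsft.splice_mem hx (hXsft.splice_mem hV hx hVl) hs,
    fun i => splice_of_le_of_eq hs, fun i hi => ?_, ?_, funext fun i => ?_⟩
  · rw [splice_of_ge (by omega), hinner_right i hi]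
  · rw [splice_of_ge (by omega), hinner_left _ (by omega), hVa]
  · show Θ (splice s x inner i) = Θ (x i)
    rcases lt_or_ge i s with his | his
    · rw [splice_of_lt his]
    rw [splice_of_ge his]
    rcases lt_or_ge i (s + l) with hil | hil
    · rw [hinner_left i (by omega), hVΘ i his hil]
    · rw [hinner_right i (by omega)]

end Routes

section Bridges

variable {A B C : Type*} {X : Set (ℤ → A)} {Y : Set (ℤ → B)} {Φ : A → B} {Ψ : B → C}
  {x x' : ℤ → A}

theorem exists_isRelBridge_of_reroutes (hXsft : IsOneStepSFT X) (hφ : sliding Φ '' X = Y)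
    (hx : x ∈ X) (hxx' : sliding Φ x = sliding Φ x') {R R' : ℤ → A} (hR : R ∈ X) (hR' : R' ∈ X)
    {m q r : ℤ} (hmq : m < q) (hRx : ∀ i ≤ m, R i = x i) (hR'x' : ∀ i, r ≤ i → R' i = x' i)
    (hRR' : R q = R' q) (hψR : sliding (Ψ ∘ Φ) R = sliding (Ψ ∘ Φ) x)
    (hψR' : sliding (Ψ ∘ Φ) R' = sliding (Ψ ∘ Φ) x') :
    ∃ xb, IsRelBridge X Y (sliding Φ) (sliding Ψ) m x x' xb := by
  have hxb := hXsft.splice_mem hR hR' hRR'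
  have hright : ∀ i, max q r ≤ i → splice q R R' i = x' i := fun i hi =>
    (splice_of_ge (le_of_max_le_left hi)).trans (hR'x' i (le_of_max_le_right hi))
  refine ⟨splice q R R', hxb, fun i hi => (splice_of_lt (by omega)).trans (hRx i hi),
    ⟨max q r, by omega, hright⟩, ?_⟩
  refine transEquiv_of_eq_of_tail_eq (sliding_mem hφ hxb) (sliding_mem hφ hx)
    (sliding_splice_eq hψR (hψR'.trans (congrArg (sliding Ψ) hxx'.symm))) (β := max q r)
    fun i hi => ?_
  exact (congrArg Φ (hright i hi)).trans (congrFun hxx' i).symm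

theorem relTransTo_of_frequently_common_route [TopologicalSpace A] (hX : IsShiftSpace X)
    (hXsft : IsOneStepSFT X) (hφ : sliding Φ '' X = Y) (hx : x ∈ X) (hx' : x' ∈ X) {y : ℤ → B}
    (hxy : sliding Φ x = y) (hx'y : sliding Φ x' = y) {w : List B} {n : ℕ} (hn : 1 ≤ n)
    (hnw : n ≤ w.length)
    (h : ∃ᶠ p in atTop, OccursAt y w p ∧ ∃ a, RelRoutable X Φ Ψ w n a (segment x p w.length) ∧
      RelRoutable X Φ Ψ w n a (segment x' p w.length)) :
    RelTransTo X Y (sliding Φ) (sliding Ψ) x x' := by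
  refine ⟨hxy.trans hx'y.symm ▸ transEquiv_refl (sliding_mem hφ hx), fun m => ?_⟩
  obtain ⟨p, hmp, hp, a, hr, hr'⟩ := frequently_atTop.1 h (m + 1)
  have hroute {z : ℤ → A} (hzy : sliding Φ z = y) :
      w.map Ψ = (segment z p w.length).map (Ψ ∘ Φ) := by
    rw [← List.map_map, map_segment_eq_of_occursAt hzy hp]
  rw [RelRoutable, hroute hxy] at hr
  rw [RelRoutable, hroute hx'y] at hr'
  obtain ⟨R, hR, hRx, -, hRa, hψR⟩ := hr.exists_reroute hX hXsft hx hn hnw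
  obtain ⟨R', hR', -, hR'x', hR'a, hψR'⟩ := hr'.exists_reroute hX hXsft hx' hn hnw
  exact exists_isRelBridge_of_reroutes hXsft hφ hx (hxy.trans hx'y.symm) hR hR' (by omega)
    (fun i hi => hRx i (by omega)) hR'x' (hRa.trans hR'a.symm) hψR hψR'

end Bridges

section UpperBound

variable {A B C : Type*} [TopologicalSpace A] {X : Set (ℤ → A)} {Y : Set (ℤ → B)} {Φ : A → B}
  {Ψ : B → C}

theorem relPtDeg_le_card_of_relPresented (hX : IsShiftSpace X) (hXsft : IsOneStepSFT X)
    (hYsft : IsOneStepSFT Y) (hφ : sliding Φ '' X = Y) {y : ℤ → B} (hrec : Recurrent y)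
    {w : List B} (hw : OccursInPoint y w) {n : ℕ} (hn : 1 ≤ n) (hnw : n ≤ w.length)
    {M : Finset A} (hM : RelPresented X Φ Ψ w n M) :
    relPtDeg X Y (sliding Φ) (sliding Ψ) y ≤ M.card := by
  by_contra! hlt
  obtain ⟨T, hT𝒞, hTcard⟩ := Set.exists_subset_encard_eq (Order.add_one_le_of_lt hlt)
  have hTfin : T.Finite := Set.finite_of_encard_eq_coe hTcard
  have : Finite T := hTfin.to_subtype
  choose xs hxs hxsy hxsT using fun S : T => hT𝒞 S.2
  have hroutes : ∃ᶠ p in atTop, ∃ v : T → M, OccursAt y w p ∧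
      ∀ S, RelRoutable X Φ Ψ w n (v S) (segment (xs S) p w.length) := by
    refine (frequently_atTop.2 fun k => hrec w hw k).mono fun p hp => ?_
    have hS (S : T) : ∃ a : M, RelRoutable X Φ Ψ w n a (segment (xs S) p w.length) := by
      obtain ⟨a, ha, hr⟩ := hM _ (blockOccursIn_segment (hxs S) p _)
        (map_segment_eq_of_occursAt (hxsy S) hp)
      exact ⟨⟨a, ha⟩, hr⟩
    choose v hv using hS
    exact ⟨v, hp, hv⟩
  obtain ⟨v, hv⟩ := frequently_exists.1 hroutes
  have hrel (S S' : T) (h : v S = v S') :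
      RelTransTo X Y (sliding Φ) (sliding Ψ) (xs S) (xs S') :=
    relTransTo_of_frequently_common_route hX hXsft hφ (hxs S) (hxs S') (hxsy S) (hxsy S') hn hnw
      (hv.mono fun _ ⟨hp, hr⟩ => ⟨hp, v S, hr S, h ▸ hr S'⟩)
  have hinj : Function.Injective v := fun S S' h => Subtype.ext <| by
    rw [hxsT S, hxsT S',
      relClass_eq_of_relTransEquiv hXsft hYsft hφ ⟨hrel S S' h, hrel S' S h.symm⟩]
  have hcard := Nat.card_le_card_of_injective v hinj
  rw [Nat.card_coe_set_eq, ← ENat.natCast_le_natCast, hTfin.cast_ncard_eq, hTcard] at hcard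
  simp only [Nat.card_eq_fintype_card, Fintype.card_coe] at hcard
  exact absurd (by exact_mod_cast hcard : M.card + 1 ≤ M.card) (by omega)

end UpperBound

section LowerBound

variable {A B C : Type*}

theorem exists_forall_of_finite_range {α κ β : Type*} [Preorder β] [IsDirectedOrder β]
    [Nonempty β] {key : α → κ} (hkey : (Set.range key).Finite) {P : κ → β → Prop}
    (hP : ∀ k, Monotone (P k)) (h : ∀ x, ∃ b, P (key x) b) : ∃ b, ∀ x, P (key x) b := by
  have hrange : ∀ k ∈ Set.range key, ∃ b, P k b := by
    rintro _ ⟨x, rfl⟩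
    exact h x
  choose! f hf using hrange
  obtain ⟨b, hb⟩ := (hkey.image f).bddAbove
  exact ⟨b, fun x => hP _ (hb ⟨_, ⟨x, rfl⟩, rfl⟩) (hf _ ⟨x, rfl⟩)⟩

theorem exists_frequently_eqOn [Finite A] {ι : Type*} (z : ℕ → ι → A) :
    ∃ zb : ι → A, ∀ F : Finset ι, ∃ᶠ k in atTop, Set.EqOn (z k) zb F := by
  let : TopologicalSpace A := ⊥
  have : DiscreteTopology A := ⟨rfl⟩
  obtain ⟨zb, hzb⟩ := exists_clusterPt_of_compactSpace (map z atTop)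
  refine ⟨zb, fun F => (mapClusterPt_iff_frequently.1 hzb
    ((F : Set ι).pi fun j => {zb j}) ?_).mono fun _ hk j hj => Set.mem_pi.1 hk j hj⟩
  exact (isOpen_set_pi F.finite_toSet fun j _ => isOpen_discrete {zb j}).mem_nhds
    fun j _ => rfl

def PointRelPresented (X : Set (ℤ → A)) (Φ : A → B) (Ψ : B → C) (y : ℤ → B) (p : ℕ)
    (M : Finset A) : Prop :=
  ∀ x ∈ X, sliding Φ x = y → ∃ E ∈ X, ∃ t : ℕ, p ≤ t ∧ E 0 = x 0 ∧ E t = x t ∧ E p ∈ M ∧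
    sliding (Ψ ∘ Φ) E = sliding Ψ y

variable {X : Set (ℤ → A)} {Y : Set (ℤ → B)} {Φ : A → B} {Ψ : B → C} {y : ℤ → B}

theorem exists_pointRelPresented [Finite A] (hXsft : IsOneStepSFT X) (hφ : sliding Φ '' X = Y)
    (hfin : relPtDeg X Y (sliding Φ) (sliding Ψ) y ≠ ⊤) :
    ∃ (p : ℕ) (M : Finset A), (M.card : ℕ∞) ≤ relPtDeg X Y (sliding Φ) (sliding Ψ) y ∧
      PointRelPresented X Φ Ψ y p M := by
  classical
  set 𝒞 := {S | ∃ x ∈ X, sliding Φ x = y ∧ S = relClass X Y (sliding Φ) (sliding Ψ) x}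
  have h𝒞 : 𝒞.Finite := Set.encard_ne_top_iff.1 hfin
  have : Fintype 𝒞 := h𝒞.fintype
  have h𝒞rep (S : 𝒞) : ∃ x, S.1 = relClass X Y (sliding Φ) (sliding Ψ) x :=
    let ⟨x, _, _, hS⟩ := S.2; ⟨x, hS⟩
  choose rep hrep using h𝒞rep
  have hcls (x : {x // x ∈ X ∧ sliding Φ x = y}) :
      relClass X Y (sliding Φ) (sliding Ψ) x.1 ∈ 𝒞 := ⟨x.1, x.2.1, x.2.2, rfl⟩
  have hequiv (x : {x // x ∈ X ∧ sliding Φ x = y}) :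
      RelTransEquiv X Y (sliding Φ) (sliding Ψ) (rep ⟨_, hcls x⟩) x.1 := by
    have hmem : x.1 ∈ relClass X Y (sliding Φ) (sliding Ψ) (rep ⟨_, hcls x⟩) :=
      hrep ⟨_, hcls x⟩ ▸ mem_relClass_self hφ x.2.1
    exact hmem.2
  obtain ⟨N, hN⟩ := exists_forall_of_finite_range (key := fun x => (x.1 0, (⟨_, hcls x⟩ : 𝒞)))
    (Set.toFinite _) (P := fun k b => ∃ L ∈ X, L 0 = k.1 ∧ (∀ j, b ≤ j → L j = rep k.2 j) ∧
      sliding (Ψ ∘ Φ) L = sliding Ψ y)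
    (fun k b b' hbb' ⟨L, hL, hL0, hLrep, hLψ⟩ =>
      ⟨L, hL, hL0, fun j hj => hLrep j (hbb'.trans hj), hLψ⟩)
    fun x => by
      obtain ⟨L, hL, hLx, ⟨b, -, hLrep⟩, hLψ⟩ := (hequiv x).2.2 0
      exact ⟨b, L, hL, hLx 0 le_rfl, hLrep, hLψ.1.1.trans (congrArg (sliding Ψ) x.2.2)⟩
  refine ⟨N.toNat, Finset.univ.image fun S => rep S N.toNat, ?_, fun x hx hxy => ?_⟩
  · calc ((Finset.univ.image fun S => rep S N.toNat).card : ℕ∞) ≤ Fintype.card 𝒞 := by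
          exact_mod_cast Finset.card_image_le
      _ = relPtDeg X Y (sliding Φ) (sliding Ψ) y := Set.coe_fintypeCard 𝒞
  obtain ⟨L, hL, hL0, hLrep, hLψ⟩ := hN ⟨x, hx, hxy⟩
  have hx := hequiv ⟨x, hx, hxy⟩
  obtain ⟨R, hR, hRrep, ⟨t, hpt, hRx⟩, hRψ⟩ := hx.1.2 N.toNat
  have hLR : L N.toNat = R N.toNat :=
    (hLrep _ (Int.self_le_toNat N)).trans (hRrep _ le_rfl).symm
  refine ⟨splice N.toNat L R, hXsft.splice_mem hL hR hLR, t.toNat, by omega,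
    (splice_of_le_of_eq hLR (by omega)).trans hL0, ?_, ?_, ?_⟩
  · rw [splice_of_ge (by omega), Int.toNat_of_nonneg (by omega), hRx t le_rfl]
  · rw [splice_of_ge le_rfl, hRrep _ le_rfl]
    exact Finset.mem_image_of_mem (fun S => rep S N.toNat) (Finset.mem_univ _)
  · exact sliding_splice_eq hLψ (hRψ.1.1.trans (hx.1.1.1.1.trans (congrArg (sliding Ψ) hxy)))

theorem exists_lift_of_eqOn_windows [Finite A] (hXsft : IsOneStepSFT X) {z : ℕ → ℤ → A}
    (hz : ∀ k, z k ∈ X) (hzy : ∀ (k : ℕ) (i : ℤ), -k ≤ i → i ≤ k → Φ (z k i) = y i) :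
    ∃ zb ∈ X, sliding Φ zb = y ∧ ∀ F : Finset ℤ, ∃ᶠ k in atTop, Set.EqOn (z k) zb F := by
  obtain ⟨zb, hzb⟩ := exists_frequently_eqOn z
  refine ⟨zb, hXsft zb fun i => ?_, funext fun i => ?_, hzb⟩
  · obtain ⟨k, hk⟩ := (hzb {i, i + 1}).exists
    rw [← hk (by simp), ← hk (by simp)]
    exact blockOccursIn_pair (hz k) i
  · obtain ⟨k, hk, hik⟩ := ((hzb {i}).and_eventually (eventually_ge_atTop i.natAbs)).exists
    rw [sliding, ← hk (by simp)]
    exact hzy k i (by omega) (by omega)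

theorem exists_mem_of_not_relPresented [TopologicalSpace A] (hX : IsShiftSpace X) {w : List B}
    {n : ℕ} {M : Set A} (h : ¬RelPresented X Φ Ψ w n M) (s : ℤ) :
    ∃ z ∈ X, (segment z s w.length).map Φ = w ∧
      ∀ a ∈ M, ¬RelRoutable X Φ Ψ w n a (segment z s w.length) := by
  obtain ⟨u, hu, huw, hnr⟩ : ∃ u, BlockOccursIn X u ∧ u.map Φ = w ∧
      ∀ a ∈ M, ¬RelRoutable X Φ Ψ w n a u := by
    simpa [RelPresented] using h
  obtain ⟨z, hz, hzu⟩ := hX.exists_occursAt hu s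
  obtain rfl : u = segment z s w.length := by
    simpa [← huw] using hzu.eq_segment
  exact ⟨z, hz, huw, hnr⟩

theorem exists_relPresented_segment [Finite A] [TopologicalSpace A] (hX : IsShiftSpace X)
    (hXsft : IsOneStepSFT X) {p : ℕ} {M : Finset A} (hM : PointRelPresented X Φ Ψ y p M) :
    ∃ k : ℕ, RelPresented X Φ Ψ (segment y (-k) (2 * k + p + 1)) (k + p + 1) M := by
  by_contra! hnot
  have hbad (k : ℕ) : ∃ z ∈ X, (∀ i : ℤ, -k ≤ i → i ≤ k + p → Φ (z i) = y i) ∧ ∀ a ∈ M,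
      ¬RelRoutable X Φ Ψ (segment y (-k) (2 * k + p + 1)) (k + p + 1) a
        (segment z (-k) (2 * k + p + 1)) := by
    obtain ⟨z, hz, hzy, hnr⟩ := exists_mem_of_not_relPresented hX (hnot k) (-k)
    rw [length_segment] at hzy hnr
    rw [map_segment, segment_eq_segment_iff] at hzy
    exact ⟨z, hz, fun i h₁ h₂ => hzy i h₁ (by omega), hnr⟩
  choose z hz hzy hzbad using hbad
  obtain ⟨zb, hzbX, hzby, hzb⟩ :=
    exists_lift_of_eqOn_windows hXsft hz fun k i h₁ _ => hzy k i h₁ (by omega)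
  obtain ⟨E, hE, t, hpt, hE0, hEt, hEp, hEψ⟩ := hM zb hzbX hzby
  obtain ⟨k, hk, htk⟩ := ((hzb {0, (t : ℤ)}).and_eventually (eventually_ge_atTop t)).exists
  set inner := splice t E (z k)
  have hinner : E t = z k t := hEt.trans (hk (by simp)).symm
  have h0 : z k 0 = inner 0 := by
    rw [show inner 0 = E 0 from splice_of_le_of_eq hinner (by omega), hE0, hk (by simp)]
  set P := splice 0 (z k) inner
  have hPl : ∀ i ≤ 0, P i = z k i := fun i => splice_of_le_of_eq h0
  have hPm : ∀ i : ℤ, 0 ≤ i → i ≤ t → P i = E i := fun i h₁ h₂ =>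
    (splice_of_ge h₁).trans (splice_of_le_of_eq hinner h₂)
  have hPr : ∀ i, (t : ℤ) ≤ i → P i = z k i := fun i hi =>
    (splice_of_ge (by omega)).trans (splice_of_ge hi)
  refine hzbad k (E p) hEp ⟨segment P (-k) (2 * k + p + 1),
    blockOccursIn_segment (hXsft.splice_mem (hz k) (hXsft.splice_mem hE (hz k) hinner) h0) _ _,
    by simp, ?_, ?_, ?_, ?_⟩
  · rw [map_segment, map_segment, segment_eq_segment_iff]
    intro i h₁ h₂
    show Ψ (Φ (P i)) = Ψ (y i)
    rcases le_or_gt i 0 with hi | hi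
    · rw [hPl i hi, hzy k i h₁ (by omega)]
    rcases le_or_gt i t with hit | hit
    · rw [hPm i hi.le hit]
      exact congrFun hEψ i
    · rw [hPr i hit.le, hzy k i h₁ (by omega)]
  · rw [getElem?_segment _ _ (by omega), getElem?_segment _ _ (by omega), hPl _ (by omega)]
  · simp only [length_segment]
    rw [getElem?_segment _ _ (by omega), getElem?_segment _ _ (by omega), hPr _ (by omega)]
  · rw [getElem?_segment _ _ (by omega), hPm _ (by omega) (by omega)]
    exact congrArg (some ∘ E) (by omega)

end LowerBound

section Main

variable {A B C : Type*} [TopologicalSpace A] {X : Set (ℤ → A)} {Y : Set (ℤ → B)} {Φ : A → B}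
  {Ψ : B → C} {y : ℤ → B}

theorem relPtDeg_le_relDepth (hX : IsShiftSpace X) (hXsft : IsOneStepSFT X)
    (hYsft : IsOneStepSFT Y) (hφ : sliding Φ '' X = Y) (hrec : Recurrent y) {w : List B}
    (hw : OccursInPoint y w) : relPtDeg X Y (sliding Φ) (sliding Ψ) y ≤ relDepth X Φ Ψ w :=
  le_sInf fun _ ⟨_, hn, hnw, _, hM, hk⟩ =>
    hk ▸ relPtDeg_le_card_of_relPresented hX hXsft hYsft hφ hrec hw hn hnw hM

theorem exists_relDepth_le_relPtDeg [Finite A] (hX : IsShiftSpace X) (hXsft : IsOneStepSFT X)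
    (hφ : sliding Φ '' X = Y) :
    ∃ w, OccursInPoint y w ∧ relDepth X Φ Ψ w ≤ relPtDeg X Y (sliding Φ) (sliding Ψ) y := by
  by_cases hfin : relPtDeg X Y (sliding Φ) (sliding Ψ) y = ⊤
  · exact ⟨[], ⟨0, fun _ h => absurd h (Nat.not_lt_zero _)⟩, hfin ▸ le_top⟩
  obtain ⟨p, M, hMcard, hM⟩ := exists_pointRelPresented hXsft hφ hfin
  obtain ⟨k, hk⟩ := exists_relPresented_segment hX hXsft hM
  have hdepth : relDepth X Φ Ψ (segment y (-k) (2 * k + p + 1)) ≤ M.card :=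
    sInf_le ⟨k + p + 1, by omega, by simp only [length_segment]; omega, M, hk, rfl⟩
  exact ⟨_, ⟨_, occursAt_segment y _ _⟩, hdepth.trans hMcard⟩

end Main

theorem relPtDeg_eq_min_relDepth_of_recurrent_general
    {A B C : Type*} [Fintype A]
    [TopologicalSpace A]
    (X : Set (ℤ → A)) (Y : Set (ℤ → B))
    (hX : IsShiftSpace X) (hXsft : IsOneStepSFT X)
    (hYsft : IsOneStepSFT Y)
    (Φ : A → B) (Ψ : B → C)
    (hφ : sliding Φ '' X = Y)
    (y : ℤ → B) (hrec : Recurrent y) :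
    relPtDeg X Y (sliding Φ) (sliding Ψ) y =
      sInf {k : ℕ∞ | ∃ w : List B, OccursInPoint y w ∧ k = relDepth X Φ Ψ w} := by
  refine le_antisymm (le_sInf fun _ ⟨w, hw, hk⟩ =>
    hk ▸ relPtDeg_le_relDepth hX hXsft hYsft hφ hrec hw) ?_
  obtain ⟨w, hw, hle⟩ := exists_relDepth_le_relPtDeg (Ψ := Ψ) (y := y) hX hXsft hφ
  refine (sInf_le ?_).trans hle
  exact ⟨w, hw, rfl⟩

theorem relPtDeg_eq_min_relDepth_of_recurrent
    {A B C : Type*} [Fintype A] [Fintype B] [Fintype C]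
    [TopologicalSpace A] [DiscreteTopology A]
    [TopologicalSpace B] [DiscreteTopology B]
    [TopologicalSpace C] [DiscreteTopology C]
    (X : Set (ℤ → A)) (Y : Set (ℤ → B)) (Z : Set (ℤ → C))
    (hX : IsShiftSpace X) (hXirr : IsIrreducibleShift X) (hXsft : IsOneStepSFT X)
    (hY : IsShiftSpace Y) (hYirr : IsIrreducibleShift Y) (hYsft : IsOneStepSFT Y)
    (hZ : IsShiftSpace Z)
    (Φ : A → B) (Ψ : B → C)
    (hφ : sliding Φ '' X = Y) (hψ : sliding Ψ '' Y = Z)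
    (y : ℤ → B) (hy : y ∈ Y) (hrec : Recurrent y) :
    relPtDeg X Y (sliding Φ) (sliding Ψ) y =
      sInf {k : ℕ∞ | ∃ w : List B, OccursInPoint y w ∧ k = relDepth X Φ Ψ w} :=
  relPtDeg_eq_min_relDepth_of_recurrent_general X Y hX hXsft hYsft Φ Ψ hφ y hrec

end SymbDyn
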